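/- Under the same piecewise affine Gaussian model, the posterior density p(z|x) = p(x|z)p(z)/p(x) equals p(x)^{-1} Σ_{ω∈Ω} 1_{z∈ω} φ(x; b_ω, Σx + A_ω Σz A_ω^T) φ(z; μ_ω(x), Σ_ω), i.e., it is a mixture of Gaussians truncated to the regions ω ∈ Ω. -/

import Mathlib

/-!
On a region `ω` the generator is affine, so `z ↦ p(x | z) p(z)` is a product of two Gaussian
densities. Completing the square in `z` splits the exponent into a quadratic form in `x - b_ω`,
whose matrix is `(Σx + A_ω Σz A_ωᵀ)⁻¹` by the Woodbury identity, plus the posterior quadratic form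
in `z - μ_ω(x)` with precision `Σ_ω⁻¹`; the matrix determinant lemma
`det (Σx + A Σz Aᵀ) = det Σx · det Σz · det Σ_ω⁻¹` matches the normalising constants. Since the
regions are disjoint, the sum of indicators reduces to the term of the region containing `z`.
-/

open Matrix MeasureTheory

/-- Multivariate Gaussian density with mean `m` and covariance `S`, evaluated at `x`. -/
noncomputable def gaussD {ι : Type} [Fintype ι] [DecidableEq ι]
    (S : Matrix ι ι ℝ) (m x : ι → ℝ) : ℝ :=
  (Real.sqrt ((2 * Real.pi) ^ (Fintype.card ι) * S.det))⁻¹ *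
    Real.exp (-(1 / 2) * ((x - m) ⬝ᵥ (S⁻¹ *ᵥ (x - m))))

namespace Matrix

lemma IsHermitian.isSymm_of_trivialStar {n α : Type*} [Star α] [TrivialStar α]
    {M : Matrix n n α} (h : M.IsHermitian) : M.IsSymm :=
  (conjTranspose_eq_transpose_of_trivial M).symm.trans h

variable {m n : Type*} [Fintype m] [Fintype n]

lemma dotProduct_mulVec_eq_transpose_mulVec (M : Matrix m n ℝ) (a : m → ℝ) (b : n → ℝ) :
    a ⬝ᵥ (M *ᵥ b) = (Mᵀ *ᵥ a) ⬝ᵥ b := by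
  rw [dotProduct_mulVec, mulVec_transpose]

lemma PosDef.add_mul_mul_transpose {Sx : Matrix m m ℝ} {Sz : Matrix n n ℝ}
    (hSx : Sx.PosDef) (hSz : Sz.PosDef) (A : Matrix m n ℝ) :
    (Sx + A * Sz * Aᵀ).PosDef := by
  have h := hSz.posSemidef.mul_mul_conjTranspose_same A
  rw [conjTranspose_eq_transpose_of_trivial] at h
  exact hSx.add_posSemidef h

variable [DecidableEq n]

lemma quadForm_complete_square (A : Matrix m n ℝ) (P : Matrix m m ℝ) (Q Λ T : Matrix n n ℝ)
    (hP : P.IsSymm) (hΛsymm : Λ.IsSymm) (hΛ : Λ = Q + Aᵀ * P * A) (hT : Λ * T = 1)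
    (u : m → ℝ) (z : n → ℝ) :
    (u - A *ᵥ z) ⬝ᵥ (P *ᵥ (u - A *ᵥ z)) + z ⬝ᵥ (Q *ᵥ z) =
      u ⬝ᵥ ((P - P * A * T * Aᵀ * P) *ᵥ u) +
        (z - T *ᵥ (Aᵀ *ᵥ (P *ᵥ u))) ⬝ᵥ (Λ *ᵥ (z - T *ᵥ (Aᵀ *ᵥ (P *ᵥ u)))) := by
  set v := Aᵀ *ᵥ (P *ᵥ u)
  have hΛμ : Λ *ᵥ (T *ᵥ v) = v := by rw [mulVec_mulVec, hT, one_mulVec]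
  have hcross : u ⬝ᵥ (P *ᵥ (A *ᵥ z)) = z ⬝ᵥ v := by
    rw [dotProduct_mulVec_eq_transpose_mulVec, hP.eq, dotProduct_mulVec_eq_transpose_mulVec,
      dotProduct_comm]
  have hcross' : (A *ᵥ z) ⬝ᵥ (P *ᵥ u) = z ⬝ᵥ v := by
    rw [dotProduct_comm, dotProduct_mulVec_eq_transpose_mulVec, dotProduct_comm]
  have hquad : (A *ᵥ z) ⬝ᵥ (P *ᵥ (A *ᵥ z)) = z ⬝ᵥ ((Aᵀ * P * A) *ᵥ z) := by
    rw [dotProduct_comm, dotProduct_mulVec_eq_transpose_mulVec, dotProduct_comm,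
      mulVec_mulVec, mulVec_mulVec]
  have hschur : u ⬝ᵥ ((P * A * T * Aᵀ * P) *ᵥ u) = v ⬝ᵥ (T *ᵥ v) := by
    simp only [← mulVec_mulVec]
    rw [dotProduct_mulVec_eq_transpose_mulVec, hP.eq, dotProduct_mulVec_eq_transpose_mulVec]
  have hμz : (T *ᵥ v) ⬝ᵥ (Λ *ᵥ z) = z ⬝ᵥ v := by
    rw [dotProduct_mulVec_eq_transpose_mulVec, hΛsymm.eq, hΛμ, dotProduct_comm]
  have hμμ : (T *ᵥ v) ⬝ᵥ (Λ *ᵥ (T *ᵥ v)) = v ⬝ᵥ (T *ᵥ v) := by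
    rw [hΛμ, dotProduct_comm]
  have hΛz : z ⬝ᵥ (Λ *ᵥ z) = z ⬝ᵥ (Q *ᵥ z) + z ⬝ᵥ ((Aᵀ * P * A) *ᵥ z) := by
    rw [hΛ, add_mulVec, dotProduct_add]
  simp only [mulVec_sub, sub_mulVec, dotProduct_sub, sub_dotProduct]
  rw [hcross, hcross', hquad, hschur, hμz, hμμ, hΛμ, hΛz]
  ring

variable [DecidableEq m]

lemma PosDef.inv_add_transpose_mul_inv_mul {Sx : Matrix m m ℝ} {Sz : Matrix n n ℝ}
    (hSx : Sx.PosDef) (hSz : Sz.PosDef) (A : Matrix m n ℝ) :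
    (Sz⁻¹ + Aᵀ * Sx⁻¹ * A).PosDef := by
  have h := hSx.inv.posSemidef.conjTranspose_mul_mul_same A
  rw [conjTranspose_eq_transpose_of_trivial] at h
  exact hSz.inv.add_posSemidef h

lemma det_add_mul_mul_transpose {Sx : Matrix m m ℝ} {Sz : Matrix n n ℝ}
    (hSx : IsUnit Sx.det) (hSz : IsUnit Sz.det) (A : Matrix m n ℝ) :
    (Sx + A * Sz * Aᵀ).det = Sx.det * Sz.det * (Sz⁻¹ + Aᵀ * Sx⁻¹ * A).det := by
  have hfactor : 1 + Sz * Aᵀ * Sx⁻¹ * A = Sz * (Sz⁻¹ + Aᵀ * Sx⁻¹ * A) := by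
    simp only [Matrix.mul_add, mul_nonsing_inv _ hSz, Matrix.mul_assoc]
  rw [Matrix.mul_assoc, det_add_mul _ _ hSx, hfactor, det_mul, mul_assoc]

end Matrix

lemma inv_sqrt_mul_inv_sqrt_eq {k l : ℕ} {a b c d : ℝ} (ha : 0 ≤ a) (hc : 0 ≤ c)
    (h : a * b = c * d) :
    (Real.sqrt ((2 * Real.pi) ^ k * a))⁻¹ * (Real.sqrt ((2 * Real.pi) ^ l * b))⁻¹ =
      (Real.sqrt ((2 * Real.pi) ^ k * c))⁻¹ * (Real.sqrt ((2 * Real.pi) ^ l * d))⁻¹ := by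
  rw [← mul_inv, ← mul_inv, ← Real.sqrt_mul (by positivity), ← Real.sqrt_mul (by positivity)]
  congr 2
  linear_combination ((2 * Real.pi) ^ k * (2 * Real.pi) ^ l) * h

lemma gaussD_mul_gaussD_zero {m n : Type} [Fintype m] [Fintype n] [DecidableEq m]
    [DecidableEq n] (A : Matrix m n ℝ) (b : m → ℝ) {Sx : Matrix m m ℝ} (hSx : Sx.PosDef)
    {Sz : Matrix n n ℝ} (hSz : Sz.PosDef) (x : m → ℝ) (z : n → ℝ) :
    gaussD Sx (A *ᵥ z + b) x * gaussD Sz 0 z =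
      gaussD (Sx + A * Sz * Aᵀ) b x *
        gaussD ((Sz⁻¹ + Aᵀ * Sx⁻¹ * A)⁻¹)
          ((Sz⁻¹ + Aᵀ * Sx⁻¹ * A)⁻¹ *ᵥ (Aᵀ *ᵥ (Sx⁻¹ *ᵥ (x - b)))) z := by
  set Λ := Sz⁻¹ + Aᵀ * Sx⁻¹ * A with hΛ_def
  have hΛ : Λ.PosDef := hSx.inv_add_transpose_mul_inv_mul hSz A
  have hΛunit : IsUnit Λ.det := hΛ.det_pos.ne'.isUnit
  have hquad : (x - (A *ᵥ z + b)) ⬝ᵥ (Sx⁻¹ *ᵥ (x - (A *ᵥ z + b))) + (z - 0) ⬝ᵥ (Sz⁻¹ *ᵥ (z - 0)) =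
      (x - b) ⬝ᵥ ((Sx + A * Sz * Aᵀ)⁻¹ *ᵥ (x - b)) +
        (z - Λ⁻¹ *ᵥ (Aᵀ *ᵥ (Sx⁻¹ *ᵥ (x - b)))) ⬝ᵥ
          (Λ⁻¹⁻¹ *ᵥ (z - Λ⁻¹ *ᵥ (Aᵀ *ᵥ (Sx⁻¹ *ᵥ (x - b))))) := by
    -- `add_mul_mul_inv_eq_sub` is Woodbury: `(Sx + A Sz Aᵀ)⁻¹ = Sx⁻¹ - Sx⁻¹ A Λ⁻¹ Aᵀ Sx⁻¹`
    rw [show x - (A *ᵥ z + b) = (x - b) - A *ᵥ z by abel, sub_zero,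
      add_mul_mul_inv_eq_sub _ _ _ _ hSx.isUnit hSz.isUnit hΛ.isUnit,
      nonsing_inv_nonsing_inv _ hΛunit]
    exact quadForm_complete_square A Sx⁻¹ Sz⁻¹ Λ Λ⁻¹ hSx.inv.isHermitian.isSymm_of_trivialStar
      hΛ.isHermitian.isSymm_of_trivialStar hΛ_def (mul_nonsing_inv _ hΛunit) (x - b) z
  have hdet : Sx.det * Sz.det = (Sx + A * Sz * Aᵀ).det * (Λ⁻¹).det := by
    rw [det_add_mul_mul_transpose hSx.det_pos.ne'.isUnit hSz.det_pos.ne'.isUnit A,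
      det_nonsing_inv, mul_assoc, Ring.mul_inverse_cancel _ hΛunit, mul_one]
  have hnorm := inv_sqrt_mul_inv_sqrt_eq (k := Fintype.card m) (l := Fintype.card n)
    hSx.det_pos.le (hSx.add_mul_mul_transpose hSz A).det_pos.le hdet
  simp only [gaussD]
  rw [mul_mul_mul_comm, ← Real.exp_add, mul_mul_mul_comm, ← Real.exp_add, hnorm, ← mul_add,
    ← mul_add, hquad]

lemma sum_indicator_eq_of_pairwise_disjoint {ι α M : Type*} [Fintype ι] [AddCommMonoid M]
    {s : ι → Set α} (hs : Pairwise (Function.onFun Disjoint s)) (f : ι → α → M)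
    {i : ι} {a : α} (ha : a ∈ s i) :
    ∑ j, (s j).indicator (f j) a = f i a := by
  rw [Fintype.sum_eq_single i fun j hji ↦ Set.indicator_of_notMem
    (fun haj ↦ (hs hji).le_bot ⟨haj, ha⟩) _]
  exact Set.indicator_of_mem ha _

theorem posterior_density_piecewise_affine_general {S D : ℕ} {ι : Type} [Fintype ι]
    (region : ι → Set (Fin S → ℝ))
    (hdisj : Pairwise (Function.onFun Disjoint region))
    (hcover : (⋃ ω, region ω) = Set.univ)
    (A : ι → Matrix (Fin D) (Fin S) ℝ) (b : ι → Fin D → ℝ)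
    (Sx : Matrix (Fin D) (Fin D) ℝ) (hSx : Sx.PosDef)
    (Sz : Matrix (Fin S) (Fin S) ℝ) (hSz : Sz.PosDef)
    (g : (Fin S → ℝ) → Fin D → ℝ)
    (hg : ∀ ω z, z ∈ region ω → g z = A ω *ᵥ z + b ω)
    (x : Fin D → ℝ) (px : ℝ) :
    ∀ z, gaussD Sx (g z) x * gaussD Sz 0 z / px =
      px⁻¹ * ∑ ω, Set.indicator (region ω)
        (fun z' => gaussD (Sx + A ω * Sz * (A ω)ᵀ) (b ω) x *
          gaussD ((Sz⁻¹ + (A ω)ᵀ * Sx⁻¹ * A ω)⁻¹)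
            ((Sz⁻¹ + (A ω)ᵀ * Sx⁻¹ * A ω)⁻¹ *ᵥ ((A ω)ᵀ *ᵥ (Sx⁻¹ *ᵥ (x - b ω)))) z') z := by
  intro z
  obtain ⟨ω, hzω⟩ := Set.mem_iUnion.mp (hcover ▸ Set.mem_univ z)
  rw [sum_indicator_eq_of_pairwise_disjoint hdisj _ hzω, hg ω z hzω,
    gaussD_mul_gaussD_zero (A ω) (b ω) hSx hSz, div_eq_inv_mul]

/-- The posterior density of a piecewise affine Gaussian generative model is a mixture of
Gaussians truncated to the regions `ω ∈ Ω`. -/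
theorem posterior_density_piecewise_affine {S D : ℕ} {ι : Type} [Fintype ι]
    (region : ι → Set (Fin S → ℝ))
    (hdisj : Pairwise (Function.onFun Disjoint region))
    (hcover : (⋃ ω, region ω) = Set.univ)
    (hmeas : ∀ ω, MeasurableSet (region ω))
    (A : ι → Matrix (Fin D) (Fin S) ℝ) (b : ι → Fin D → ℝ)
    (Sx : Matrix (Fin D) (Fin D) ℝ) (hSx : Sx.PosDef)
    (Sz : Matrix (Fin S) (Fin S) ℝ) (hSz : Sz.PosDef)
    (g : (Fin S → ℝ) → Fin D → ℝ)
    (hg : ∀ ω z, z ∈ region ω → g z = A ω *ᵥ z + b ω)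
    (x : Fin D → ℝ) (px : ℝ)
    (hpx : px = ∫ z, gaussD Sx (g z) x * gaussD Sz 0 z)
    (hpx_pos : 0 < px) :
    ∀ z, gaussD Sx (g z) x * gaussD Sz 0 z / px =
      px⁻¹ * ∑ ω, Set.indicator (region ω)
        (fun z' => gaussD (Sx + A ω * Sz * (A ω)ᵀ) (b ω) x *
          gaussD ((Sz⁻¹ + (A ω)ᵀ * Sx⁻¹ * A ω)⁻¹)
            ((Sz⁻¹ + (A ω)ᵀ * Sx⁻¹ * A ω)⁻¹ *ᵥ ((A ω)ᵀ *ᵥ (Sx⁻¹ *ᵥ (x - b ω)))) z') z :=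
  posterior_density_piecewise_affine_general region hdisj hcover A b Sx hSx Sz hSz g hg x px
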